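/- arXiv:math/0410149 — 5 statements merged into one kernel-verified Lean document; each statement's English description precedes it below -/
import Mathlib

section
/- Let (E, ℰ, m) be a σ-finite measure space and φ : E → E a measure-preserving invertible transformation. Let A ∈ ℰ with 0 < m(A) < ∞, and for k ≥ 1 define A_k = {x ∈ Aᶜ : φ^k(x) ∈ A and φ^j(x) ∉ A for j = 1,…,k−1}, with A_0 = A. If φ is conservative (in the sense that m-almost every point of A returns to A, i.e. m(A ∖ ⋃_{k≥1} φ^{-k}(A)) = 0), then m(A_n) → 0 as n → ∞, and consequently (1/n)·m(⋃_{k=0}^{n-1} φ^{-k}(A)) → 0 as n → ∞. -/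
open MeasureTheory Filter Function
open scoped ENNReal Topology

/-!
Write `B k = φ^[k]⁻¹' A`. The sets `A_k` are the disjointed sequence of `B`, so
`m (⋃_{k<n} B k) = ∑_{k<n} m (A_k)`. The set `⋃_{k≤n} B k` is both the disjoint union of
`⋃_{k<n} B k` and `A_n`, and that of `φ⁻¹ (⋃_{k<n} B k)` and `A \ ⋃_{k<n} B (k+1)`;
since `φ` preserves `m`, `m (A_n) = m (A \ ⋃_{k<n} B (k+1))`. These sets decrease to the points
of `A` that never return, a null set by conservativity, and the Cesàro means of `m (A_k)` follow.
-/

theorem Set.biUnion_range_succ_eq_union {α : Type*} (s : ℕ → Set α) (n : ℕ) :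
    ⋃ k ∈ Finset.range (n + 1), s k = s 0 ∪ ⋃ k ∈ Finset.range n, s (k + 1) := by
  rw [Finset.range_add_one', Finset.set_biUnion_insert, Finset.map_eq_image,
    Finset.set_biUnion_finset_image]
  rfl

theorem Set.biUnion_range_disjointed {α : Type*} (s : ℕ → Set α) (n : ℕ) :
    ⋃ k ∈ Finset.range n, disjointed s k = ⋃ k ∈ Finset.range n, s k := by
  cases n with
  | zero => simp
  | succ n => rw [biUnion_range_succ_disjointed, partialSups_eq_biUnion_range]

theorem Set.iInter_diff_biUnion_range {α : Type*} (A : Set α) (s : ℕ → Set α) :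
    ⋂ n, A \ ⋃ k ∈ Finset.range n, s k = A \ ⋃ k, s k := by
  ext x
  simp only [Set.mem_iInter, Set.mem_sdiff, Set.mem_iUnion, Finset.mem_range, exists_prop,
    not_exists, not_and]
  exact ⟨fun h => ⟨(h 0).1, fun k => (h (k + 1)).2 k k.lt_succ_self⟩,
    fun h _ => ⟨h.1, fun k _ => h.2 k⟩⟩

theorem Function.disjointed_preimage_iterate_eq_setOf {α : Type*} (f : α → α) (A : Set α)
    {k : ℕ} (hk : 1 ≤ k) :
    disjointed (fun k => f^[k] ⁻¹' A) k =
      {x | x ∉ A ∧ f^[k] x ∈ A ∧ ∀ j, 1 ≤ j → j < k → f^[j] x ∉ A} := by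
  ext x
  simp only [disjointed_eq_inter_compl, Set.mem_ofPred_eq, Set.mem_inter_iff, Set.mem_preimage,
    Set.mem_iInter, Set.mem_compl_iff]
  constructor
  · rintro ⟨hxk, hxj⟩
    exact ⟨hxj 0 hk, hxk, fun j _ hj => hxj j hj⟩
  · rintro ⟨hx0, hxk, hxj⟩
    refine ⟨hxk, fun j hj => ?_⟩
    rcases j with _ | j
    · exact hx0
    · exact hxj _ j.succ_pos hj

namespace MeasureTheory

theorem measure_biUnion_range_eq_sum_disjointed {α : Type*} [MeasurableSpace α] (μ : Measure α)
    {s : ℕ → Set α} (hs : ∀ k, MeasurableSet (s k)) (n : ℕ) :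
    μ (⋃ k ∈ Finset.range n, s k) = ∑ k ∈ Finset.range n, μ (disjointed s k) := by
  rw [← Set.biUnion_range_disjointed,
    measure_biUnion_finset ((disjoint_disjointed s).set_pairwise _)
      fun k _ => MeasurableSet.disjointed hs k]

namespace MeasurePreserving

variable {α : Type*} [MeasurableSpace α] {μ : Measure α} {f : α → α} {A : Set α}

theorem measure_disjointed_preimage_iterate (hf : MeasurePreserving f μ μ)
    (hA : MeasurableSet A) (hA_fin : μ A ≠ ∞) (n : ℕ) :
    μ (disjointed (fun k => f^[k] ⁻¹' A) n) =
      μ (A \ ⋃ k ∈ Finset.range n, f^[k + 1] ⁻¹' A) := by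
  set B : ℕ → Set α := fun k => f^[k] ⁻¹' A
  have hB : ∀ k, MeasurableSet (B k) := fun k => (hf.iterate k).measurable hA
  set U := ⋃ k ∈ Finset.range n, B k
  set V := ⋃ k ∈ Finset.range n, B (k + 1)
  have hV : MeasurableSet V := Finset.measurableSet_biUnion _ fun k _ => hB (k + 1)
  have hVU : μ V = μ U := by
    have : V = f ⁻¹' U := by
      simp only [V, U, B, Set.preimage_iUnion₂, iterate_succ, Set.preimage_comp]
    rw [this, hf.measure_preimage
      (Finset.measurableSet_biUnion _ fun k _ => hB k).nullMeasurableSet]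
  have hU_fin : μ U ≠ ∞ :=
    ne_top_of_le_ne_top (ENNReal.sum_ne_top.2 fun k _ => by
      rwa [(hf.iterate k).measure_preimage hA.nullMeasurableSet]) (measure_biUnion_finset_le _ _)
  have key : μ U + μ (disjointed B n) = μ U + μ (A \ V) := calc
    μ U + μ (disjointed B n) = μ (⋃ k ∈ Finset.range (n + 1), B k) := by
      rw [measure_biUnion_range_eq_sum_disjointed μ hB (n + 1), Finset.sum_range_succ,
        measure_biUnion_range_eq_sum_disjointed μ hB n]
    _ = μ (V ∪ (A \ V)) := by
      rw [Set.biUnion_range_succ_eq_union, Set.union_comm, Set.union_sdiff_self]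
      rfl
    _ = μ U + μ (A \ V) := by rw [measure_union Set.disjoint_sdiff_right (hA.diff hV), hVU]
  exact (ENNReal.add_right_inj hU_fin).1 key

theorem tendsto_measure_disjointed_preimage_iterate (hf : MeasurePreserving f μ μ)
    (hA : MeasurableSet A) (hA_fin : μ A ≠ ∞) :
    Tendsto (fun n => μ (disjointed (fun k => f^[k] ⁻¹' A) n)) atTop
      (𝓝 (μ (A \ ⋃ k, f^[k + 1] ⁻¹' A))) := by
  simp_rw [hf.measure_disjointed_preimage_iterate hA hA_fin]
  rw [← Set.iInter_diff_biUnion_range]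
  refine tendsto_measure_iInter_atTop (fun n => (hA.diff ?_).nullMeasurableSet)
    (fun a b hab => Set.sdiff_subset_sdiff_right (Set.biUnion_subset_biUnion_left
      (Finset.range_subset_range.2 hab)))
    ⟨0, ne_top_of_le_ne_top hA_fin (measure_mono Set.sdiff_subset)⟩
  exact Finset.measurableSet_biUnion _ fun k _ => (hf.iterate (k + 1)).measurable hA

end MeasurePreserving

end MeasureTheory

theorem ENNReal.tendsto_cesaro_zero {a : ℕ → ℝ≥0∞} (ha : ∀ n, a n ≠ ∞)
    (h : Tendsto a atTop (𝓝 0)) :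
    Tendsto (fun n : ℕ => (∑ k ∈ Finset.range n, a k) / n) atTop (𝓝 0) := by
  have hreal : Tendsto (fun n => (a n).toReal) atTop (𝓝 0) :=
    ENNReal.toReal_zero ▸ (ENNReal.tendsto_toReal ENNReal.zero_ne_top).comp h
  have hfin : ∀ n : ℕ, (∑ k ∈ Finset.range n, a k) / n ≠ ∞
    | 0 => by simp
    | n + 1 => ENNReal.div_ne_top (ENNReal.sum_ne_top.2 fun k _ => ha k) (by simp)
  rw [← ENNReal.tendsto_toReal_iff hfin ENNReal.zero_ne_top, ENNReal.toReal_zero]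
  convert hreal.cesaro using 2 with n
  rw [ENNReal.toReal_div, ENNReal.toReal_sum fun k _ => ha k]
  simp [div_eq_inv_mul]

theorem stmt0_general {E : Type*} [MeasurableSpace E] (m : Measure E)
    (φ : E ≃ᵐ E) (hφ : MeasurePreserving φ m m)
    (A : Set E) (hA : MeasurableSet A) (hA1 : m A < ∞)
    (Ak : ℕ → Set E)
    (hAk0 : Ak 0 = A)
    (hAk : ∀ k, 1 ≤ k →
      Ak k = {x | x ∉ A ∧ (⇑φ)^[k] x ∈ A ∧ ∀ j, 1 ≤ j → j < k → (⇑φ)^[j] x ∉ A})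
    (hcons : m (A \ ⋃ k : ℕ, (⇑φ)^[k + 1] ⁻¹' A) = 0) :
    Tendsto (fun n => m (Ak n)) atTop (nhds 0) ∧
      Tendsto (fun n : ℕ => m (⋃ k ∈ Finset.range n, (⇑φ)^[k] ⁻¹' A) / (n : ℝ≥0∞))
        atTop (nhds 0) := by
  have hAk_eq : Ak = disjointed (fun k => (⇑φ)^[k] ⁻¹' A) := by
    funext k
    rcases Nat.eq_zero_or_pos k with rfl | hk
    · simp [hAk0]
    · rw [hAk k hk, disjointed_preimage_iterate_eq_setOf _ _ hk]
  have hAk_fin : ∀ k, m (Ak k) ≠ ∞ := fun k => by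
    rw [hAk_eq]
    refine ne_top_of_le_ne_top hA1.ne ((measure_mono (disjointed_subset _ k)).trans_eq ?_)
    exact (hφ.iterate k).measure_preimage hA.nullMeasurableSet
  have hfirst := hφ.tendsto_measure_disjointed_preimage_iterate hA hA1.ne
  rw [hcons, ← hAk_eq] at hfirst
  refine ⟨hfirst, ?_⟩
  simp_rw [measure_biUnion_range_eq_sum_disjointed m fun k => (hφ.iterate k).measurable hA,
    ← hAk_eq]
  exact ENNReal.tendsto_cesaro_zero hAk_fin hfirst

/-- Kac-type lemma: for a conservative measure-preserving invertible transformation,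
the measure of the set of points first entering `A` after `n` steps tends to `0`,
and consequently `m(⋃_{k<n} φ^{-k} A)/n → 0`. -/
theorem stmt0 {E : Type*} [MeasurableSpace E] (m : Measure E) [SigmaFinite m]
    (φ : E ≃ᵐ E) (hφ : MeasurePreserving φ m m)
    (A : Set E) (hA : MeasurableSet A) (hA0 : 0 < m A) (hA1 : m A < ∞)
    (Ak : ℕ → Set E)
    (hAk0 : Ak 0 = A)
    (hAk : ∀ k, 1 ≤ k →
      Ak k = {x | x ∉ A ∧ (⇑φ)^[k] x ∈ A ∧ ∀ j, 1 ≤ j → j < k → (⇑φ)^[j] x ∉ A})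
    (hcons : m (A \ ⋃ k : ℕ, (⇑φ)^[k + 1] ⁻¹' A) = 0) :
    Tendsto (fun n => m (Ak n)) atTop (nhds 0) ∧
      Tendsto (fun n : ℕ => m (⋃ k ∈ Finset.range n, (⇑φ)^[k] ⁻¹' A) / (n : ℝ≥0∞))
        atTop (nhds 0) :=
  stmt0_general m φ hφ A hA hA1 Ak hAk0 hAk hcons
end

section
/- Let (E, ℰ, m) be a σ-finite measure space and φ : E → E a measure-preserving invertible transformation. With the notation A_k and R_k as above (A_0 = A, A_k the set of points outside A entering A for the first time after k steps, R_k the set of points of A with first return time k), one has for every k ≥ 0: m(A_k) = Σ_{j=k+1}^{∞} m(R_j) + lim_{n→∞} m(A_n). -/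
open MeasureTheory Filter Function
open scoped ENNReal

/-- For a measure-preserving invertible transformation and a set `A` of finite positive
measure, with `A_k` the set of points outside `A` entering `A` for the first time after
`k` steps (`A_0 = A`) and `R_k` the set of points of `A` with first return time `k`,
one has `m(A_k) = Σ_{j ≥ k+1} m(R_j) + lim_n m(A_n)` for every `k ≥ 0`. -/
theorem stmt1 {E : Type*} [MeasurableSpace E] (m : Measure E) [SigmaFinite m]
    (φ : E ≃ᵐ E) (hφ : MeasurePreserving φ m m)
    (A : Set E) (hA : MeasurableSet A) (hA0 : 0 < m A) (hA1 : m A < ∞)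
    (Ak Rk : ℕ → Set E)
    (hAk0 : Ak 0 = A)
    (hAk : ∀ k, 1 ≤ k →
      Ak k = {x | x ∉ A ∧ (⇑φ)^[k] x ∈ A ∧ ∀ j, 1 ≤ j → j < k → (⇑φ)^[j] x ∉ A})
    (hRk : ∀ k, 1 ≤ k →
      Rk k = {x | x ∈ A ∧ (⇑φ)^[k] x ∈ A ∧ ∀ j, 1 ≤ j → j < k → (⇑φ)^[j] x ∉ A}) :
    ∃ L : ℝ≥0∞, Tendsto (fun n => m (Ak n)) atTop (nhds L) ∧
      ∀ k : ℕ, m (Ak k) = (∑' j : ℕ, m (Rk (k + 1 + j))) + L := by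
  have hiter : ∀ n : ℕ, Measurable ((⇑φ)^[n]) := fun n => φ.measurable.iterate n
  -- measurability of the "pattern" sets
  have hpat : ∀ (S : Set E) (hS : MeasurableSet S) (n : ℕ),
      MeasurableSet {x | x ∈ S ∧ (⇑φ)^[n] x ∈ A ∧ ∀ j, 1 ≤ j → j < n → (⇑φ)^[j] x ∉ A} := by
    intro S hS n
    have : {x | x ∈ S ∧ (⇑φ)^[n] x ∈ A ∧ ∀ j, 1 ≤ j → j < n → (⇑φ)^[j] x ∉ A}
        = S ∩ ((⇑φ)^[n] ⁻¹' A) ∩ ⋂ j ∈ Finset.Ico 1 n, ((⇑φ)^[j] ⁻¹' A)ᶜ := by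
      ext x
      simp only [Set.mem_inter_iff, Set.mem_iInter, Set.mem_compl_iff, Set.mem_preimage,
        Finset.mem_Ico, Set.mem_setOf_eq]
      tauto
    rw [this]
    exact ((hS.inter ((hiter n) hA)).inter
      (MeasurableSet.biInter (Finset.Ico 1 n).countable_toSet
        (fun j _ => ((hiter j) hA).compl)))
  have hRmeas : ∀ n : ℕ, MeasurableSet (Rk (n + 1)) := by
    intro n; rw [hRk (n + 1) (by omega)]; exact hpat A hA (n + 1)
  have hAmeas : ∀ n : ℕ, MeasurableSet (Ak n) := by
    intro n
    rcases n with _ | n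
    · rw [hAk0]; exact hA
    · rw [hAk (n + 1) (by omega)]; exact hpat Aᶜ hA.compl (n + 1)
  -- the key set identity
  have hkey : ∀ k : ℕ, ⇑φ ⁻¹' (Ak k) = Rk (k + 1) ∪ Ak (k + 1) := by
    intro k
    ext x
    have hRs := hRk (k + 1) (by omega)
    have hAs := hAk (k + 1) (by omega)
    rcases Nat.eq_zero_or_pos k with rfl | hk
    · simp only [hAk0, hRs, hAs, Set.mem_preimage, Set.mem_union, Set.mem_setOf_eq]
      constructor
      · intro h
        by_cases hx : x ∈ A
        · left; exact ⟨hx, by simpa using h, by omega⟩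
        · right; exact ⟨hx, by simpa using h, by omega⟩
      · rintro (⟨_, h, _⟩ | ⟨_, h, _⟩) <;> simpa using h
    · rw [hAk k hk]
      simp only [hRs, hAs, Set.mem_preimage, Set.mem_union, Set.mem_setOf_eq]
      have hit : ∀ j : ℕ, (⇑φ)^[j] (φ x) = (⇑φ)^[j + 1] x := by
        intro j; rw [Function.iterate_succ_apply]
      constructor
      · rintro ⟨h1, h2, h3⟩
        rw [hit] at h2
        have h3' : ∀ j, 1 ≤ j → j < k + 1 → (⇑φ)^[j] x ∉ A := by
          intro j hj1 hj2
          rcases Nat.eq_or_lt_of_le hj1 with rfl | hj1'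
          · simpa using h1
          · have := h3 (j - 1) (by omega) (by omega)
            rw [hit] at this
            have : (⇑φ)^[j - 1 + 1] x ∉ A := this
            simpa [Nat.sub_add_cancel hj1] using this
        by_cases hx : x ∈ A
        · left; exact ⟨hx, h2, h3'⟩
        · right; exact ⟨hx, h2, h3'⟩
      · rintro (⟨_, h2, h3⟩ | ⟨_, h2, h3⟩) <;>
        · refine ⟨by simpa using h3 1 le_rfl (by omega), ?_, ?_⟩
          · rw [hit]; exact h2
          · intro j hj1 hj2
            rw [hit]
            exact h3 (j + 1) (by omega) (by omega)
    
  -- disjointness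
  have hdisj : ∀ k : ℕ, Disjoint (Rk (k + 1)) (Ak (k + 1)) := by
    intro k
    rw [hRk (k + 1) (by omega), hAk (k + 1) (by omega)]
    exact Set.disjoint_left.2 fun x hx hx' => hx'.1 hx.1
  -- the recursion
  have hrec : ∀ k : ℕ, m (Ak k) = m (Rk (k + 1)) + m (Ak (k + 1)) := by
    intro k
    have := hφ.measure_preimage (hAmeas k).nullMeasurableSet
    rw [← this, hkey k, measure_union (hdisj k) (hAmeas (k + 1))]
  -- monotonicity / finiteness
  have hmono : ∀ k : ℕ, m (Ak (k + 1)) ≤ m (Ak k) := by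
    intro k; rw [hrec k]; exact le_add_self
  have hanti : Antitone (fun n => m (Ak n)) :=
    antitone_nat_of_succ_le fun n => hmono n
  refine ⟨⨅ n, m (Ak n), tendsto_atTop_iInf hanti, ?_⟩
  intro k
  -- finite sum identity
  have hfin : ∀ n : ℕ, m (Ak k) = (∑ j ∈ Finset.range n, m (Rk (k + 1 + j))) + m (Ak (k + n)) := by
    intro n
    induction n with
    | zero => simp
    | succ n ih =>
      have e1 : k + 1 + n = k + n + 1 := by omega
      have e2 : k + (n + 1) = k + n + 1 := by omega
      rw [Finset.sum_range_succ, e1, e2, add_assoc, ← hrec (k + n)]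
      exact ih
  have h1 : Tendsto (fun n => (∑ j ∈ Finset.range n, m (Rk (k + 1 + j))) + m (Ak (k + n)))
      atTop (nhds ((∑' j : ℕ, m (Rk (k + 1 + j))) + ⨅ n, m (Ak n))) := by
    apply Tendsto.add
    · exact ENNReal.tendsto_nat_tsum _
    · have he : (fun n => m (Ak (k + n))) = (fun n => m (Ak n)) ∘ (fun n => n + k) := by
        funext n; simp [Nat.add_comm]
      rw [he]
      exact (tendsto_atTop_iInf hanti).comp (tendsto_add_atTop_nat k)
  have h2 : Tendsto (fun n => (∑ j ∈ Finset.range n, m (Rk (k + 1 + j))) + m (Ak (k + n)))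
      atTop (nhds (m (Ak k))) := by
    simp only [← hfin]; exact tendsto_const_nhds
  exact tendsto_nhds_unique h2 h1
end

section
/- Let (E, ℰ, m) be a σ-finite measure space, φ nonsingular invertible, w_n = d(m∘φ^n)/dm, f ∈ L^α(m) for some α > 0, and f_k(x) = w_k(x)^{1/α} f(φ^k(x)). Define A = {(x, y) ∈ E × (0, ∞) : 0 < y ≤ |f(x)|^α} and let φ_* be the Maharam skew product φ_*(x,y) = (φ(x), y/w_1(x)). Then for every n ≥ 1, (m × Leb)(⋃_{k=0}^{n-1} φ_*^{-k}(A)) = ∫_E max_{k=0,…,n-1} |f_k(x)|^α m(dx). -/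
open MeasureTheory Filter Function
open scoped ENNReal

/-- With `f ∈ L^α(m)`, `f_k(x) = w_k(x)^{1/α} f(φ^k x)`, the Maharam skew product
`φ_*` and `A = {(x,y) : 0 < y ≤ |f x|^α}`, one has
`(m × Leb)(⋃_{k<n} φ_*^{-k} A) = ∫ max_{k<n} |f_k|^α dm` for every `n ≥ 1`. -/
theorem stmt3 {E : Type*} [MeasurableSpace E] (m : Measure E) [SigmaFinite m]
    (φ : E ≃ᵐ E) (w : ℕ → E → ℝ) (α : ℝ) (hα : 0 < α)
    (f : E → ℝ) (hf_meas : Measurable f)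
    (hf_mem : ∫⁻ x, ENNReal.ofReal (|f x| ^ α) ∂m < ∞)
    (hw_meas : ∀ n, Measurable (w n))
    (hw_pos : ∀ n x, 0 < w n x)
    (hw_zero : ∀ x, w 0 x = 1)
    (hw_cocycle : ∀ n k x, w (n + k) x = w n x * w k ((⇑φ)^[n] x))
    (hw_density : ∀ n (s : Set E), MeasurableSet s →
      m ((⇑φ)^[n] '' s) = ∫⁻ x in s, ENNReal.ofReal (w n x) ∂m)
    (fk : ℕ → E → ℝ)
    (hfk : ∀ k x, fk k x = w k x ^ (1 / α) * f ((⇑φ)^[k] x))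
    (A : Set (E × ℝ))
    (hA : A = {p : E × ℝ | 0 < p.2 ∧ p.2 ≤ |f p.1| ^ α}) :
    ∀ n : ℕ, 1 ≤ n →
      (m.prod (volume : Measure ℝ))
          (⋃ k ∈ Finset.range n,
            (fun p : E × ℝ => ((φ p.1 : E), p.2 / w 1 p.1))^[k] ⁻¹' A)
        = ∫⁻ x, ENNReal.ofReal (⨆ k : Fin n, |fk k x| ^ α) ∂m := by
  intro n hn
  set T : E × ℝ → E × ℝ := fun p => ((φ p.1 : E), p.2 / w 1 p.1) with hT
  -- iterate formula
  have hiter : ∀ (k : ℕ) (p : E × ℝ), T^[k] p = ((⇑φ)^[k] p.1, p.2 / w k p.1) := by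
    intro k
    induction k with
    | zero => intro p; simp [hw_zero]
    | succ k ih =>
      intro p
      rw [Function.iterate_succ_apply', ih]
      simp only [hT]
      refine Prod.ext ?_ ?_
      · simp [Function.iterate_succ_apply']
      · simp only
        rw [div_div, ← hw_cocycle k 1 p.1]
  -- g k x = |fk k x| ^ α
  have hg : ∀ (k : ℕ) (x : E), |fk k x| ^ α = w k x * |f ((⇑φ)^[k] x)| ^ α := by
    intro k x
    rw [hfk, abs_mul, Real.mul_rpow (abs_nonneg _) (abs_nonneg _),
      abs_of_nonneg (Real.rpow_nonneg (hw_pos k x).le _),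
      ← Real.rpow_mul (hw_pos k x).le, one_div_mul_cancel hα.ne', Real.rpow_one]
  set g : ℕ → E → ℝ := fun k x => w k x * |f ((⇑φ)^[k] x)| ^ α with hgdef
  have hgm : ∀ k, Measurable (g k) := by
    intro k
    exact (hw_meas k).mul ((Real.continuous_rpow_const hα.le).measurable.comp
      (hf_meas.comp (φ.measurable.iterate k)).abs)
  set M : E → ℝ := fun x => ⨆ k : Fin n, |fk k x| ^ α with hM
  haveI hnne : Nonempty (Fin n) := ⟨⟨0, hn⟩⟩
  have hMg : ∀ x, M x = ⨆ k : Fin n, g k x := by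
    intro x; simp only [hM]; congr 1; funext k; exact hg k x
  -- M is attained and measurable
  have hMle : ∀ x y, y ≤ M x ↔ ∃ k : Fin n, y ≤ g k x := by
    intro x y
    obtain ⟨k0, hk0⟩ := Finite.exists_max (fun k : Fin n => g k x)
    have hsup : M x = g k0 x := by
      rw [hMg]
      exact le_antisymm (ciSup_le hk0)
        (le_ciSup (f := fun k : Fin n => g (k : ℕ) x)
          (Set.Finite.bddAbove (Set.finite_range _)) k0)
    constructor
    · intro h; exact ⟨k0, hsup ▸ h⟩
    · rintro ⟨k, hk⟩; rw [hsup]; exact hk.trans (hk0 k)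
  have hMmeas : Measurable M := by
    have : M = fun x => Finset.univ.sup' Finset.univ_nonempty
        (fun k : Fin n => g (k : ℕ) x) := by
      funext x
      rw [hMg, Finset.sup'_univ_eq_ciSup]
    have h1 : (fun x => Finset.univ.sup' Finset.univ_nonempty
        (fun k : Fin n => g (k : ℕ) x))
        = Finset.univ.sup' Finset.univ_nonempty (fun k : Fin n => g (k : ℕ)) := by
      funext x; rw [Finset.sup'_apply]
    rw [this, h1]
    exact Finset.measurable_sup' _ (fun k _ => hgm (k : ℕ))
  -- the union is the region under M
  have hset : (⋃ k ∈ Finset.range n, T^[k] ⁻¹' A)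
      = {p : E × ℝ | 0 < p.2 ∧ p.2 ≤ M p.1} := by
    ext ⟨x, y⟩
    simp only [Set.mem_iUnion, Set.mem_preimage, Finset.mem_range, hA, hiter,
      Set.mem_setOf_eq]
    have hdivpos : ∀ k : ℕ, 0 < y / w k x ↔ 0 < y := by
      intro k
      constructor
      · intro h
        have := mul_pos h (hw_pos k x)
        rwa [div_mul_cancel₀ y (hw_pos k x).ne'] at this
      · intro h; exact div_pos h (hw_pos k x)
    constructor
    · rintro ⟨k, hkn, hpos, hle⟩
      refine ⟨(hdivpos k).1 hpos, (hMle x y).2 ⟨⟨k, hkn⟩, ?_⟩⟩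
      rw [div_le_iff₀ (hw_pos k x)] at hle
      simpa [hgdef, mul_comm] using hle
    · rintro ⟨hy, hle⟩
      obtain ⟨k, hk⟩ := (hMle x y).1 hle
      refine ⟨k, k.2, (hdivpos k).2 hy, ?_⟩
      rw [div_le_iff₀ (hw_pos k x)]
      simpa [hgdef, mul_comm] using hk
  have hSmeas : MeasurableSet {p : E × ℝ | 0 < p.2 ∧ p.2 ≤ M p.1} := by
    exact (measurableSet_lt measurable_const measurable_snd).inter
      (measurableSet_le measurable_snd (hMmeas.comp measurable_fst))
  rw [hset, Measure.prod_apply hSmeas]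
  refine lintegral_congr fun x => ?_
  have : (Prod.mk x ⁻¹' {p : E × ℝ | 0 < p.2 ∧ p.2 ≤ M p.1}) = Set.Ioc 0 (M x) := by
    ext y; simp [Set.mem_Ioc]
  rw [this, Real.volume_Ioc, sub_zero]
end

section
/- Let (W, 𝒲, ν) be a σ-finite measure space and f : W × ℤ → ℝ with Σ_{k ∈ ℤ} ∫_W |f(v,k)|^α ν(dv) < ∞ for some α > 0 (no compact support assumption). With b_n and g defined as b_n^α = Σ_{j ∈ ℤ} ∫_W max_{k=0,…,n-1} |f(v, j+k)|^α ν(dv) and g(v) = sup_{k ∈ ℤ} |f(v,k)|, one has lim_{n→∞} n^{-1} b_n^α = ∫_W g(v)^α ν(dv) ∈ (0, ∞), provided f is not identically 0. -/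
open MeasureTheory Filter Function
open scoped ENNReal

/-!
Fix `v` and put `x k = |f (v, k)| ^ α`, a summable sequence. Every index lies in exactly `n` windows
of length `n`, so the sum of the window maxima is at least `n · sup x`. Conversely, split `x` into its
restriction to `[-m, m]`, whose window maxima vanish except on the `2m + n` windows meeting `[-m, m]`,
and its tail, whose window maxima are at most the window sums: the sum of the window maxima is at most
`(2m + n) · sup x + n · ∑_{|k| > m} x k`. Letting `n → ∞` and then `m → ∞` gives
`(window sum) / n → sup x`. The quotient is dominated by `∑_k x k`, whose integral is the finite total
mass, so dominated convergence integrates the limit over `v`.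
-/

namespace ENNReal

lemma ofReal_iSup_of_finite {ι : Type*} [Finite ι] (r : ι → ℝ) :
    ENNReal.ofReal (⨆ i, r i) = ⨆ i, ENNReal.ofReal (r i) := by
  cases isEmpty_or_nonempty ι
  · simp [Real.iSup_of_isEmpty]
  · exact Monotone.map_ciSup_of_continuousAt ENNReal.continuous_ofReal.continuousAt
      (fun _ _ => ENNReal.ofReal_le_ofReal) (Set.finite_range r).bddAbove

lemma ofReal_ciSup_abs_rpow {ι : Type*} [Nonempty ι] (r : ι → ℝ) {α : ℝ} (hα : 0 < α)
    (h : ⨆ i, ENNReal.ofReal (|r i| ^ α) ≠ ∞) :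
    ENNReal.ofReal ((⨆ i, |r i|) ^ α) = ⨆ i, ENNReal.ofReal (|r i| ^ α) := by
  set B := (⨆ i, ENNReal.ofReal (|r i| ^ α)).toReal
  have hbdd : BddAbove (Set.range fun i => |r i|) := by
    refine ⟨B ^ α⁻¹, Set.forall_mem_range.2 fun i => ?_⟩
    refine (Real.le_rpow_inv_iff_of_pos (abs_nonneg _) ENNReal.toReal_nonneg hα).2 ?_
    exact (ENNReal.ofReal_le_iff_le_toReal h).1 (le_iSup (fun i => ENNReal.ofReal (|r i| ^ α)) i)
  have hpow : ∀ {t : ℝ}, 0 ≤ t → ENNReal.ofReal (t ^ α) = ENNReal.ofReal t ^ α :=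
    fun ht => (ENNReal.ofReal_rpow_of_nonneg ht hα.le).symm
  rw [hpow (Real.iSup_nonneg fun i => abs_nonneg (r i))]
  simp_rw [hpow (abs_nonneg _)]
  exact Monotone.map_ciSup_of_continuousAt
    ((ENNReal.continuous_rpow_const.comp ENNReal.continuous_ofReal).continuousAt)
    (fun _ _ hst => ENNReal.rpow_le_rpow (ENNReal.ofReal_le_ofReal hst) hα.le) hbdd

lemma ofReal_abs_rpow_eq_zero {x α : ℝ} (hα : 0 < α) : ENNReal.ofReal (|x| ^ α) = 0 ↔ x = 0 := by
  rw [ENNReal.ofReal_eq_zero, (Real.rpow_nonneg (abs_nonneg x) α).ge_iff_eq',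
    Real.rpow_eq_zero (abs_nonneg x) hα.ne', abs_eq_zero]

lemma tendsto_div_natCast_of_le_of_le_add {u : ℕ → ℝ≥0∞} {c : ℝ≥0∞}
    (hlow : ∀ n, n * c ≤ u n) (hup : ∀ ε > 0, ∃ C ≠ ∞, ∀ n, u n ≤ C + n * (c + ε)) :
    Tendsto (fun n : ℕ => u n / n) atTop (nhds c) := by
  refine tendsto_of_le_liminf_of_limsup_le ?_ ?_
  · refine le_liminf_of_le (by isBoundedDefault) ?_
    filter_upwards [eventually_ne_atTop 0] with n hn
    rw [ENNReal.le_div_iff_mul_le (Or.inl (by exact_mod_cast hn)) (Or.inl (by simp)), mul_comm]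
    exact hlow n
  · refine ENNReal.le_of_forall_pos_le_add fun ε hε _ => ?_
    obtain ⟨C, hC, hu⟩ := hup ε (by exact_mod_cast hε)
    have hlim : Tendsto (fun n : ℕ => C / n + (c + ε)) atTop (nhds (c + ε)) := by
      simpa [div_eq_mul_inv] using
        (ENNReal.Tendsto.const_mul ENNReal.tendsto_inv_nat_nhds_zero (Or.inr hC)).add_const
          (c + ε)
    calc limsup (fun n : ℕ => u n / n) atTop ≤ limsup (fun n : ℕ => C / n + (c + ε)) atTop := by
          refine limsup_le_limsup ?_
          filter_upwards [eventually_ne_atTop 0] with n hn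
          calc u n / n ≤ (C + n * (c + ε)) / n := ENNReal.div_le_div_right (hu n) _
            _ = C / n + (c + ε) := by
              rw [ENNReal.add_div, mul_comm,
                ENNReal.mul_div_cancel_right (by exact_mod_cast hn) (by simp)]
      _ = c + ε := hlim.limsup_eq

lemma exists_tsum_abs_gt_le {x : ℤ → ℝ≥0∞} (hx : ∑' l, x l ≠ ∞) {ε : ℝ≥0∞}
    (hε : 0 < ε) : ∃ m : ℕ, ∑' l, {l : ℤ | (m : ℤ) < |l|}.indicator x l ≤ ε := by
  obtain ⟨m, hm⟩ := ((tendsto_order.1 ((ENNReal.tendsto_tsum_compl_atTop_zero hx).comp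
    (Finset.tendsto_Icc_neg (R := ℤ)))).2 ε hε).exists
  have hcompl : {l : ℤ | (m : ℤ) < |l|} = {l | l ∉ Finset.Icc (-(m : ℤ)) m} := by
    ext l
    simp only [Set.mem_ofPred_eq, Finset.mem_Icc, lt_abs]
    omega
  refine ⟨m, ?_⟩
  rw [hcompl, ← tsum_subtype]
  exact hm.le

end ENNReal

/-- Integrated over `v` with `x = |f (v, ·)| ^ α`, this is the paper's `b_n^α`. -/
noncomputable def windowSupSum (x : ℤ → ℝ≥0∞) (n : ℕ) : ℝ≥0∞ := ∑' j : ℤ, ⨆ k : Fin n, x (j + k)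

lemma windowSupSum_add_le (x y : ℤ → ℝ≥0∞) (n : ℕ) :
    windowSupSum (x + y) n ≤ windowSupSum x n + windowSupSum y n := by
  rw [windowSupSum, windowSupSum, windowSupSum, ← ENNReal.tsum_add]
  exact ENNReal.tsum_le_tsum fun j => iSup_le fun k =>
    add_le_add (le_iSup (fun k : Fin n => x (j + k)) k) (le_iSup (fun k : Fin n => y (j + k)) k)

lemma windowSupSum_le_mul_tsum (x : ℤ → ℝ≥0∞) (n : ℕ) :
    windowSupSum x n ≤ n * ∑' l, x l :=
  calc windowSupSum x n ≤ ∑' j : ℤ, ∑ k : Fin n, x (j + k) :=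
        ENNReal.tsum_le_tsum fun j => iSup_le fun k =>
          Finset.single_le_sum (f := fun k : Fin n => x (j + k)) (fun _ _ => zero_le)
            (Finset.mem_univ k)
    _ = ∑ k : Fin n, ∑' j : ℤ, x (j + k) := Summable.tsum_finsetSum fun _ _ => ENNReal.summable
    _ = ∑ _k : Fin n, ∑' l, x l :=
        Finset.sum_congr rfl fun k _ => (Equiv.addRight (k : ℤ)).tsum_eq x
    _ = n * ∑' l, x l := by simp

lemma mul_le_windowSupSum (x : ℤ → ℝ≥0∞) (n : ℕ) (l : ℤ) : n * x l ≤ windowSupSum x n := by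
  have hinj : Injective fun k : Fin n => l - k := fun k k' h => by
    simpa [Fin.ext_iff] using h
  calc (n : ℝ≥0∞) * x l = ∑ _k : Fin n, x l := by simp
    _ ≤ ∑ k : Fin n, ⨆ k' : Fin n, x (l - k + k') :=
        Finset.sum_le_sum fun k _ => le_iSup_of_le k (by rw [sub_add_cancel])
    _ = ∑' k : Fin n, ⨆ k' : Fin n, x (l - k + k') := (tsum_fintype _).symm
    _ ≤ windowSupSum x n :=
        ENNReal.tsum_comp_le_tsum_of_injective hinj fun j => ⨆ k' : Fin n, x (j + k')

lemma mul_iSup_le_windowSupSum (x : ℤ → ℝ≥0∞) (n : ℕ) :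
    n * ⨆ l, x l ≤ windowSupSum x n := by
  rw [ENNReal.mul_iSup]
  exact iSup_le (mul_le_windowSupSum x n)

lemma windowSupSum_le_of_abs_le {x : ℤ → ℝ≥0∞} {m : ℕ} (hx : ∀ l, (m : ℤ) < |l| → x l = 0)
    (n : ℕ) : windowSupSum x n ≤ (2 * m + n : ℕ) * ⨆ l, x l := by
  set s := Finset.Icc (-(m : ℤ) - n + 1) m
  have hzero : ∀ j ∉ s, ⨆ k : Fin n, x (j + k) = 0 := fun j hj =>
    ENNReal.iSup_eq_zero.2 fun k => hx _ <| by
      have := k.isLt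
      simp only [s, Finset.mem_Icc, not_and_or, not_le] at hj
      rw [lt_abs]
      omega
  calc windowSupSum x n = ∑ j ∈ s, ⨆ k : Fin n, x (j + k) := tsum_eq_sum hzero
    _ ≤ ∑ _j ∈ s, ⨆ l, x l := Finset.sum_le_sum fun j _ => iSup_le fun k => le_iSup x _
    _ = (2 * m + n : ℕ) * ⨆ l, x l := by
        rw [Finset.sum_const, Int.card_Icc, nsmul_eq_mul]
        congr 2
        omega

theorem tendsto_windowSupSum_div {x : ℤ → ℝ≥0∞} (hx : ∑' l, x l ≠ ∞) :
    Tendsto (fun n : ℕ => windowSupSum x n / n) atTop (nhds (⨆ l, x l)) := by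
  refine ENNReal.tendsto_div_natCast_of_le_of_le_add (mul_iSup_le_windowSupSum x) fun ε hε => ?_
  obtain ⟨m, hm⟩ := ENNReal.exists_tsum_abs_gt_le hx hε
  set S := ⨆ l, x l
  set tail := {l : ℤ | (m : ℤ) < |l|}
  have hS : S ≠ ∞ := ne_top_of_le_ne_top hx (iSup_le ENNReal.le_tsum)
  refine ⟨2 * m * S, by finiteness, fun n => ?_⟩
  have hcore : windowSupSum (tailᶜ.indicator x) n ≤ (2 * m + n : ℕ) * S := by
    refine (windowSupSum_le_of_abs_le (fun l hl => Set.indicator_of_notMem (by simpa) x) n).trans ?_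
    gcongr
    exact iSup_mono fun l => Set.indicator_le_self _ _ l
  calc windowSupSum x n
      ≤ windowSupSum (tailᶜ.indicator x) n + windowSupSum (tail.indicator x) n := by
        simpa only [Set.indicator_compl_add_self] using
          windowSupSum_add_le (tailᶜ.indicator x) (tail.indicator x) n
    _ ≤ (2 * m + n : ℕ) * S + n * ε :=
        add_le_add hcore ((windowSupSum_le_mul_tsum _ n).trans (by gcongr))
    _ = 2 * m * S + n * (S + ε) := by push_cast; ring

theorem tendsto_lintegral_windowSupSum_div {W : Type*} [MeasurableSpace W] {ν : Measure W}
    {a : ℤ → W → ℝ≥0∞} (ha : ∀ l, AEMeasurable (a l) ν)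
    (hfin : ∑' l, ∫⁻ v, a l v ∂ν ≠ ∞) :
    Tendsto (fun n : ℕ => (∫⁻ v, windowSupSum (a · v) n ∂ν) / n) atTop
      (nhds (∫⁻ v, ⨆ l, a l v ∂ν)) := by
  rw [← lintegral_tsum ha] at hfin
  have hmeas : ∀ n, AEMeasurable (fun v => windowSupSum (a · v) n) ν := fun n =>
    AEMeasurable.tsum fun j => AEMeasurable.iSup fun k => ha _
  have hlim := tendsto_lintegral_of_dominated_convergence' (fun v => ∑' l, a l v)
    (fun n => (hmeas n).div_const (n : ℝ≥0∞))
    (fun n => ae_of_all _ fun v => ENNReal.div_le_of_le_mul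
      ((windowSupSum_le_mul_tsum _ n).trans_eq (mul_comm _ _))) hfin
    (by filter_upwards [ae_lt_top' (AEMeasurable.tsum ha) hfin] with v hv
        using tendsto_windowSupSum_div hv.ne)
  refine hlim.congr fun n => ?_
  simp only [div_eq_mul_inv]
  exact lintegral_mul_const'' _ (hmeas n)

theorem stmt5_general {W : Type*} [MeasurableSpace W] (ν : Measure W)
    (α : ℝ) (hα : 0 < α) (f : W × ℤ → ℝ)
    (hf_meas : ∀ k : ℤ, Measurable (fun v => f (v, k)))
    (hsum : (∑' k : ℤ, ∫⁻ v, ENNReal.ofReal (|f (v, k)| ^ α) ∂ν) < ∞)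
    (hnz : ¬ (∀ᵐ v ∂ν, ∀ k : ℤ, f (v, k) = 0))
    (bα : ℕ → ℝ≥0∞)
    (hbα : ∀ n, bα n =
      ∑' j : ℤ, ∫⁻ v, ENNReal.ofReal (⨆ k : Fin n, |f (v, j + k)| ^ α) ∂ν)
    (g : W → ℝ) (hg : ∀ v, g v = ⨆ k : ℤ, |f (v, k)|) :
    0 < ∫⁻ v, ENNReal.ofReal (g v ^ α) ∂ν ∧
      (∫⁻ v, ENNReal.ofReal (g v ^ α) ∂ν) < ∞ ∧
      Tendsto (fun n : ℕ => bα n / (n : ℝ≥0∞)) atTop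
        (nhds (∫⁻ v, ENNReal.ofReal (g v ^ α) ∂ν)) := by
  set a : ℤ → W → ℝ≥0∞ := fun l v => ENNReal.ofReal (|f (v, l)| ^ α)
  have ha : ∀ l, Measurable (a l) := fun l =>
    ENNReal.measurable_ofReal.comp ((hf_meas l).abs.pow_const α)
  have hmass : ∫⁻ v, ∑' l, a l v ∂ν < ∞ := by rwa [lintegral_tsum fun l => (ha l).aemeasurable]
  have hb : ∀ n, bα n = ∫⁻ v, windowSupSum (a · v) n ∂ν := fun n => by
    simp only [hbα, windowSupSum, ENNReal.ofReal_iSup_of_finite]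
    exact (lintegral_tsum fun j => (Measurable.iSup fun k => ha _).aemeasurable).symm
  have hg_ae : (fun v => ENNReal.ofReal (g v ^ α)) =ᵐ[ν] fun v => ⨆ l, a l v := by
    filter_upwards [ae_lt_top (Measurable.tsum ha) hmass.ne] with v hv
    rw [hg]
    exact ENNReal.ofReal_ciSup_abs_rpow _ hα (ne_top_of_le_ne_top hv.ne (iSup_le ENNReal.le_tsum))
  have hpos : 0 < ∫⁻ v, ⨆ l, a l v ∂ν := by
    refine pos_iff_ne_zero.2 fun h0 => hnz ?_
    filter_upwards [(lintegral_eq_zero_iff (Measurable.iSup ha)).1 h0] with v hv k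
    exact (ENNReal.ofReal_abs_rpow_eq_zero hα).1 (ENNReal.iSup_eq_zero.1 hv k)
  rw [lintegral_congr_ae hg_ae]
  refine ⟨hpos, (lintegral_mono fun v => iSup_le ENNReal.le_tsum).trans_lt hmass, ?_⟩
  simpa only [hb] using tendsto_lintegral_windowSupSum_div (fun l => (ha l).aemeasurable) hsum.ne

/-- For a general kernel `f : W × ℤ → ℝ` (no compact support) with finite total
`α`-mass and not ν-a.e. identically zero, `n^{-1} b_n^α → ∫ g^α dν ∈ (0, ∞)`. -/
theorem stmt5 {W : Type*} [MeasurableSpace W] (ν : Measure W) [SigmaFinite ν]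
    (α : ℝ) (hα : 0 < α) (f : W × ℤ → ℝ)
    (hf_meas : ∀ k : ℤ, Measurable (fun v => f (v, k)))
    (hsum : (∑' k : ℤ, ∫⁻ v, ENNReal.ofReal (|f (v, k)| ^ α) ∂ν) < ∞)
    (hnz : ¬ (∀ᵐ v ∂ν, ∀ k : ℤ, f (v, k) = 0))
    (bα : ℕ → ℝ≥0∞)
    (hbα : ∀ n, bα n =
      ∑' j : ℤ, ∫⁻ v, ENNReal.ofReal (⨆ k : Fin n, |f (v, j + k)| ^ α) ∂ν)
    (g : W → ℝ) (hg : ∀ v, g v = ⨆ k : ℤ, |f (v, k)|) :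
    0 < ∫⁻ v, ENNReal.ofReal (g v ^ α) ∂ν ∧
      (∫⁻ v, ENNReal.ofReal (g v ^ α) ∂ν) < ∞ ∧
      Tendsto (fun n : ℕ => bα n / (n : ℝ≥0∞)) atTop
        (nhds (∫⁻ v, ENNReal.ofReal (g v ^ α) ∂ν)) :=
  stmt5_general ν α hα f hf_meas hsum hnz bα hbα g hg
end

section
/- Let (x_j)_{j≥1} be i.i.d. Bernoulli(1/2) random variables (the binary digits of a uniform point of (0,1]). Let R_n = max_{j=1,…,n} sup{m ≥ 1 : x_j = x_{j+1} = ⋯ = x_{j+m-1} = 0} be the longest run of zeroes starting in {1,…,n}. Then for every 0 < γ < 1, lim_{n→∞} log_2 E[2^{γ R_n}] / log_2 n = γ. -/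
/-!
A union bound over the `n` starting points gives `P(R_n ≥ m) ≤ n 2^{-m}`. Hence
`P(R_n = r) ≤ min(1, n 2^{-r}) ≤ (n 2^{-r})^b` for any `b ∈ (0, 1]`, and summing a geometric
series yields `E[2^{γ R_n}] ≤ C_b n^b` for every `b ∈ (γ, 1]`.

Conversely, if `2^k (k + 1) ≤ n`, the `2^k` disjoint blocks of length `k + 1` in `{1, …, n}` are
all-zero with probability `2^{-(k+1)}` each and pairwise jointly with probability `2^{-2(k+1)}`;
the second-order Bonferroni inequality then makes some block all-zero with probability at least
`1/2 - 1/4`, so `E[2^{γ R_n}] ≥ 2^{γ(k+1)} / 4`. For `θ < 1` and large `n` one can take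
`2^{k+1} ≥ n^θ`, so `E[2^{γ R_n}] ≥ n^{γθ} / 4`. Taking logarithms gives the limit `γ`.
-/

open MeasureTheory ProbabilityTheory Filter Real
open scoped ENNReal Topology

def runLengths (s : ℕ → Bool) (n : ℕ) : Set ℕ :=
  {m | 1 ≤ m ∧ ∃ j, 1 ≤ j ∧ j ≤ n ∧ ∀ i < m, s (j + i) = false}

/-- `sSup` of an unbounded subset of `ℕ` is `0`; for a Bernoulli sequence `runLengths s n` is
almost surely bounded (`ae_bddAbove_runLengths`). -/
noncomputable def longestRun (s : ℕ → Bool) (n : ℕ) : ℕ := sSup (runLengths s n)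

section Runs

variable {s : ℕ → Bool} {n m r : ℕ}

lemma mem_runLengths_of_le (h : m ∈ runLengths s n) (hr : 1 ≤ r) (hrm : r ≤ m) :
    r ∈ runLengths s n := by
  obtain ⟨-, j, hj, hjn, hrun⟩ := h
  exact ⟨hr, j, hj, hjn, fun i hi => hrun i (hi.trans_le hrm)⟩

lemma mem_runLengths_of_le_longestRun (hr : 1 ≤ r) (h : r ≤ longestRun s n) :
    r ∈ runLengths s n := by
  have hne : (runLengths s n).Nonempty := by
    by_contra hemp
    rw [Set.not_nonempty_iff_eq_empty] at hemp
    simp [longestRun, hemp] at h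
    omega
  obtain ⟨m, hm, hrm⟩ := exists_lt_of_lt_csSup hne (Nat.sub_one_lt_of_le hr h)
  exact mem_runLengths_of_le hm hr (by omega)

lemma bddAbove_runLengths_of_notMem (h : m + 1 ∉ runLengths s n) :
    BddAbove (runLengths s n) :=
  ⟨m, fun r hr => not_lt.1 fun hmr => h (mem_runLengths_of_le hr (by omega) hmr)⟩

end Runs

lemma measurable_sSup_nat : Measurable (sSup : Set ℕ → ℕ) := by
  refine measurable_of_Iic fun r => ?_
  have : sSup ⁻¹' Set.Iic r = {S : Set ℕ | (∀ m ∈ S, m ≤ r) ∨ ¬ BddAbove S} := by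
    ext S
    by_cases hS : BddAbove S
    · simp [hS, csSup_le_iff' hS]
    · simp [hS]
  rw [this, measurableSet_setOfPred]
  simp only [bddAbove_def]
  fun_prop

section RunEvents

variable {Ω : Type*} {x : ℕ → Ω → Bool} {n m : ℕ}

lemma measurable_longestRun [MeasurableSpace Ω] (hmeas : ∀ j, Measurable (x j)) (n : ℕ) :
    Measurable fun ω => longestRun (x · ω) n :=
  measurable_sSup_nat.comp <| measurable_set_iff.2 fun m => by
    simp only [runLengths, Set.mem_ofPred_eq]
    fun_prop

lemma setOf_mem_runLengths_eq (hm : 1 ≤ m) :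
    {ω | m ∈ runLengths (x · ω) n} =
      ⋃ j ∈ Finset.Icc 1 n, {ω | ∀ i ∈ Finset.Ico j (j + m), x i ω = false} := by
  ext ω
  simp only [runLengths, Set.mem_ofPred_eq, Set.mem_iUnion, Finset.mem_Icc, Finset.mem_Ico]
  refine ⟨fun ⟨_, j, hj, hjn, hrun⟩ => ⟨j, ⟨hj, hjn⟩, fun i hi => ?_⟩,
    fun ⟨j, ⟨hj, hjn⟩, hrun⟩ => ⟨hm, j, hj, hjn, fun i hi => hrun _ (by omega)⟩⟩
  obtain ⟨i, rfl⟩ := Nat.exists_eq_add_of_le hi.1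
  exact hrun i (by omega)

end RunEvents

section SecondMoment

variable {Ω ι : Type*} [MeasurableSpace Ω] [DecidableEq ι]

lemma sum_measure_le_measure_biUnion_add_sum_offDiag (μ : Measure Ω) (T : Finset ι)
    {A : ι → Set Ω} (hA : ∀ t, MeasurableSet (A t)) :
    ∑ t ∈ T, μ (A t) ≤ μ (⋃ t ∈ T, A t) + ∑ p ∈ T.offDiag, μ (A p.1 ∩ A p.2) := by
  have hU : MeasurableSet (⋃ t ∈ T, A t) := T.measurableSet_biUnion fun t _ => hA t
  have hpoint : ∀ ω, ∑ t ∈ T, (A t).indicator 1 ω ≤ (⋃ t ∈ T, A t).indicator 1 ω +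
      ∑ p ∈ T.offDiag, (A p.1 ∩ A p.2).indicator (1 : Ω → ℝ≥0∞) ω := by
    intro ω
    by_cases h : ∃ t₀ ∈ T, ω ∈ A t₀
    · obtain ⟨t₀, ht₀, hω⟩ := h
      rw [← Finset.add_sum_erase T _ ht₀, Set.indicator_of_mem hω,
        Set.indicator_of_mem (Set.mem_iUnion₂.2 ⟨t₀, ht₀, hω⟩)]
      gcongr
      -- the pairs `(t₀, t)` with `t ≠ t₀` already account for every other `A t` containing `ω`
      calc ∑ t ∈ T.erase t₀, (A t).indicator 1 ω
          = ∑ t ∈ T.erase t₀, (A t₀ ∩ A t).indicator (1 : Ω → ℝ≥0∞) ω := by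
            refine Finset.sum_congr rfl fun t _ => ?_
            rw [Set.inter_indicator_one, Pi.mul_apply, Set.indicator_of_mem hω, Pi.one_apply,
              one_mul]
        _ = ∑ p ∈ (T.erase t₀).image (t₀, ·), (A p.1 ∩ A p.2).indicator 1 ω := by
            rw [Finset.sum_image fun _ _ _ _ h => (Prod.mk.inj h).2]
        _ ≤ _ := Finset.sum_le_sum_of_subset fun p hp => by
            obtain ⟨t, ht, rfl⟩ := Finset.mem_image.1 hp
            obtain ⟨hne, ht⟩ := Finset.mem_erase.1 ht
            exact Finset.mem_offDiag.2 ⟨ht₀, ht, hne.symm⟩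
    · simp only [not_exists, not_and] at h
      rw [Finset.sum_eq_zero fun t ht => Set.indicator_of_notMem (h t ht) _]
      exact bot_le
  calc ∑ t ∈ T, μ (A t) = ∫⁻ ω, ∑ t ∈ T, (A t).indicator 1 ω ∂μ := by
        rw [lintegral_finsetSum _ fun t _ => measurable_one.indicator (hA t)]
        simp_rw [lintegral_indicator_one (hA _)]
    _ ≤ ∫⁻ ω, ((⋃ t ∈ T, A t).indicator 1 ω +
          ∑ p ∈ T.offDiag, (A p.1 ∩ A p.2).indicator 1 ω) ∂μ := lintegral_mono hpoint
    _ = μ (⋃ t ∈ T, A t) + ∑ p ∈ T.offDiag, μ (A p.1 ∩ A p.2) := by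
        rw [lintegral_add_left (measurable_one.indicator hU),
          lintegral_finsetSum _ fun p _ => measurable_one.indicator ((hA p.1).inter (hA p.2)),
          lintegral_indicator_one hU]
        simp_rw [lintegral_indicator_one ((hA _).inter (hA _))]

lemma natCast_mul_le_measure_biUnion_add_sq (μ : Measure Ω) (T : Finset ι) {A : ι → Set Ω}
    (hA : ∀ t, MeasurableSet (A t)) {p : ℝ≥0∞} (hp : ∀ t ∈ T, μ (A t) = p)
    (hpair : ∀ s ∈ T, ∀ t ∈ T, s ≠ t → μ (A s ∩ A t) = p ^ 2) :
    T.card * p ≤ μ (⋃ t ∈ T, A t) + (T.card * p) ^ 2 :=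
  calc T.card * p = ∑ t ∈ T, μ (A t) := by
        rw [Finset.sum_congr rfl hp, Finset.sum_const, nsmul_eq_mul]
    _ ≤ μ (⋃ t ∈ T, A t) + ∑ p ∈ T.offDiag, μ (A p.1 ∩ A p.2) :=
      sum_measure_le_measure_biUnion_add_sum_offDiag μ T hA
    _ ≤ μ (⋃ t ∈ T, A t) + (T.card * p) ^ 2 := by
      rw [Finset.sum_congr rfl fun q hq => by
        obtain ⟨hs, ht, hne⟩ := Finset.mem_offDiag.1 hq; exact hpair _ hs _ ht hne]
      rw [Finset.sum_const, nsmul_eq_mul, Finset.offDiag_card, mul_pow, ← Nat.cast_pow, sq]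
      gcongr
      exact (Nat.sub_le _ _).trans (sq _).ge

end SecondMoment

lemma ENNReal.min_one_le_rpow {y : ℝ≥0∞} {b : ℝ} (hb0 : 0 < b) (hb1 : b ≤ 1) :
    min 1 y ≤ y ^ b := by
  rcases le_total y 1 with hy | hy
  · exact (min_le_right 1 y).trans (by simpa using ENNReal.rpow_le_rpow_of_exponent_ge hy hb1)
  · exact (min_le_left 1 y).trans (ENNReal.one_le_rpow hy hb0)

lemma ENNReal.two_rpow_mul_mul_inv_two_pow_rpow (γ b : ℝ) (hb : 0 ≤ b) (c : ℝ≥0∞) (r : ℕ) :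
    (2 : ℝ≥0∞) ^ (γ * r) * (c * 2⁻¹ ^ r) ^ b = c ^ b * (2 ^ (γ - b)) ^ r := by
  rw [ENNReal.mul_rpow_of_nonneg _ _ hb, ← ENNReal.inv_pow, ENNReal.inv_rpow,
    ← ENNReal.rpow_natCast_mul, ← ENNReal.rpow_neg, ← ENNReal.rpow_mul_natCast, mul_left_comm,
    ← ENNReal.rpow_add _ _ two_ne_zero ENNReal.ofNat_ne_top]
  ring_nf

lemma ENNReal.inv_one_sub_two_rpow_ne_top {a : ℝ} (ha : a < 0) :
    ((1 - 2 ^ a)⁻¹ : ℝ≥0∞) ≠ ⊤ :=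
  ENNReal.inv_ne_top.2
    (tsub_pos_of_lt (ENNReal.rpow_lt_one_of_one_lt_of_neg ENNReal.one_lt_two ha)).ne'

lemma eventually_logb_two_add_one_le_rpow {ε : ℝ} (hε : 0 < ε) :
    ∀ᶠ y : ℝ in atTop, logb 2 y + 1 ≤ y ^ ε := by
  have hlog2 : 0 < log 2 := log_pos one_lt_two
  filter_upwards [(isLittleO_log_rpow_atTop hε).bound (half_pos hlog2),
    (tendsto_rpow_atTop hε).eventually_ge_atTop 2, eventually_gt_atTop 0] with y hlog hy2 hy0
  have hlogy : log y ≤ log 2 / 2 * y ^ ε := (le_abs_self _).trans <| by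
    simpa [abs_of_nonneg (rpow_nonneg hy0.le ε)] using hlog
  have : logb 2 y ≤ y ^ ε / 2 := by
    rw [logb, div_le_iff₀ hlog2]
    linarith
  linarith

lemma eventually_exists_two_pow_mul_succ_le {θ : ℝ} (hθ0 : 0 ≤ θ) (hθ1 : θ < 1) :
    ∀ᶠ n : ℕ in atTop, ∃ k : ℕ, 2 ^ k * (k + 1) ≤ n ∧ (n : ℝ) ^ θ ≤ 2 ^ (k + 1) := by
  filter_upwards [tendsto_natCast_atTop_atTop.eventually
    (eventually_logb_two_add_one_le_rpow (sub_pos.2 hθ1)), eventually_ge_atTop 1] with n hlog hn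
  have hn1 : (1 : ℝ) ≤ n := by exact_mod_cast hn
  set u := θ * logb 2 n with hu_def
  have hlogn : 0 ≤ logb 2 n := logb_nonneg one_lt_two hn1
  have hu : 0 ≤ u := mul_nonneg hθ0 hlogn
  have h2u : (2 : ℝ) ^ u = (n : ℝ) ^ θ := by
    rw [hu_def, mul_comm, rpow_mul zero_le_two, rpow_logb two_pos one_lt_two.ne' (by linarith)]
  refine ⟨⌊u⌋₊, ?_, ?_⟩
  · have hpow : (2 : ℝ) ^ ⌊u⌋₊ ≤ (n : ℝ) ^ θ := by
      rw [← h2u, ← rpow_natCast]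
      exact rpow_le_rpow_of_exponent_le one_le_two (Nat.floor_le hu)
    have hlen : (⌊u⌋₊ : ℝ) + 1 ≤ (n : ℝ) ^ (1 - θ) := by
      have : u ≤ logb 2 n := mul_le_of_le_one_left hlogn hθ1.le
      linarith [Nat.floor_le hu]
    have : (2 : ℝ) ^ ⌊u⌋₊ * (⌊u⌋₊ + 1) ≤ n := by
      calc (2 : ℝ) ^ ⌊u⌋₊ * (⌊u⌋₊ + 1) ≤ (n : ℝ) ^ θ * (n : ℝ) ^ (1 - θ) := by gcongr
        _ = n := by rw [← rpow_add (by linarith), add_sub_cancel, rpow_one]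
    exact_mod_cast this
  · rw [← h2u, ← rpow_natCast]
    exact rpow_le_rpow_of_exponent_le one_le_two (by push_cast; exact (Nat.lt_floor_add_one u).le)

lemma tendsto_log_div_log_of_rpow_bounds {f : ℕ → ℝ} {γ : ℝ}
    (hlow : ∀ᶠ a in 𝓝[<] γ, ∃ c > 0, ∀ᶠ n : ℕ in atTop, c * (n : ℝ) ^ a ≤ f n)
    (hup : ∀ᶠ b in 𝓝[>] γ, ∃ C, ∀ᶠ n : ℕ in atTop, f n ≤ C * (n : ℝ) ^ b) :
    Tendsto (fun n => log (f n) / log n) atTop (𝓝 γ) := by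
  have hlog : Tendsto (fun n : ℕ => log n) atTop atTop :=
    tendsto_log_atTop.comp tendsto_natCast_atTop_atTop
  have hpos : ∀ᶠ n : ℕ in atTop, 0 < f n := by
    obtain ⟨a, c, hc, hcf⟩ := hlow.exists
    filter_upwards [hcf, eventually_ge_atTop 1] with n hn hn1
    exact lt_of_lt_of_le (by positivity) hn
  refine tendsto_order.2 ⟨fun a ha => ?_, fun b hb => ?_⟩
  · obtain ⟨a', ⟨c, hc, hcf⟩, haa', -⟩ := (hlow.and (Ioo_mem_nhdsLT ha)).exists
    filter_upwards [hcf, (hlog.const_mul_atTop (sub_pos.2 haa')).eventually_gt_atTop (-log c),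
      eventually_gt_atTop 1] with n hn hgrow hn1
    have hlogn : 0 < log n := log_pos (by exact_mod_cast hn1)
    rw [lt_div_iff₀ hlogn]
    calc a * log n < log c + a' * log n := by linarith
      _ = log (c * (n : ℝ) ^ a') := by
        rw [log_mul hc.ne' (by positivity), log_rpow (by positivity)]
      _ ≤ log (f n) := log_le_log (by positivity) hn
  · obtain ⟨b', ⟨C, hCf⟩, -, hb'b⟩ := (hup.and (Ioo_mem_nhdsGT hb)).exists
    filter_upwards [hCf, hpos, (hlog.const_mul_atTop (sub_pos.2 hb'b)).eventually_gt_atTop (log C),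
      eventually_gt_atTop 1] with n hn hfn hgrow hn1
    have hlogn : 0 < log n := log_pos (by exact_mod_cast hn1)
    have hC : 0 < C := pos_of_mul_pos_left (hfn.trans_le hn) (by positivity)
    rw [div_lt_iff₀ hlogn]
    calc log (f n) ≤ log (C * (n : ℝ) ^ b') := log_le_log hfn hn
      _ = log C + b' * log n := by
        rw [log_mul hC.ne' (by positivity), log_rpow (by positivity)]
      _ < b * log n := by linarith

section Bernoulli

variable {Ω : Type*} [MeasurableSpace Ω] {P : Measure Ω} {x : ℕ → Ω → Bool} {q : ℝ≥0∞}
  {n m : ℕ} {γ : ℝ}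

lemma measure_forall_eq_false (hindep : iIndepFun x P)
    (hlaw : ∀ j, P {ω | x j ω = false} = q) (S : Finset ℕ) :
    P {ω | ∀ i ∈ S, x i ω = false} = q ^ S.card := by
  have hS : {ω | ∀ i ∈ S, x i ω = false} = ⋂ i ∈ S, x i ⁻¹' {false} := by ext; simp
  rw [hS, hindep.meas_biInter fun i _ => ⟨{false}, measurableSet_singleton false, rfl⟩]
  simp [Set.preimage, hlaw]

lemma measure_mem_runLengths_le (hindep : iIndepFun x P)
    (hlaw : ∀ j, P {ω | x j ω = false} = q) (hm : 1 ≤ m) :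
    P {ω | m ∈ runLengths (x · ω) n} ≤ n * q ^ m := by
  rw [setOf_mem_runLengths_eq hm]
  refine (measure_biUnion_finset_le _ _).trans_eq ?_
  simp_rw [measure_forall_eq_false hindep hlaw]
  simp

lemma ae_bddAbove_runLengths (hindep : iIndepFun x P)
    (hlaw : ∀ j, P {ω | x j ω = false} = q) (hq : q < 1) :
    ∀ᵐ ω ∂P, BddAbove (runLengths (x · ω) n) := by
  have hlim : Tendsto (fun m : ℕ => (n : ℝ≥0∞) * q ^ m) atTop (𝓝 0) := by
    simpa using ENNReal.Tendsto.const_mul (ENNReal.tendsto_pow_atTop_nhds_zero_of_lt_one hq)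
      (Or.inr (ENNReal.natCast_ne_top n))
  refine ae_iff.2 (le_antisymm (ge_of_tendsto hlim ?_) bot_le)
  filter_upwards [eventually_ge_atTop 1] with m hm
  refine (measure_mono fun ω hω => ?_).trans (measure_mem_runLengths_le hindep hlaw hm)
  by_contra hmem
  exact hω (bddAbove_runLengths_of_notMem (m := m - 1) (by rwa [Nat.sub_add_cancel hm]))

lemma measure_longestRun_eq_le [IsProbabilityMeasure P] (hindep : iIndepFun x P)
    (hlaw : ∀ j, P {ω | x j ω = false} = q) (hn : 1 ≤ n) (r : ℕ) :
    P {ω | longestRun (x · ω) n = r} ≤ min 1 (n * q ^ r) := by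
  refine le_min prob_le_one ?_
  rcases Nat.eq_zero_or_pos r with rfl | hr
  · exact prob_le_one.trans (by simpa using hn)
  · have hsub : {ω | longestRun (x · ω) n = r} ⊆ {ω | r ∈ runLengths (x · ω) n} :=
      fun ω hω => mem_runLengths_of_le_longestRun hr (le_of_eq hω.symm)
    exact (measure_mono hsub).trans (measure_mem_runLengths_le hindep hlaw hr)

lemma natCast_mul_pow_le_measure_mem_runLengths_add_sq (hmeas : ∀ j, Measurable (x j))
    (hindep : iIndepFun x P) (hlaw : ∀ j, P {ω | x j ω = false} = q) {K L : ℕ} (hL : 1 ≤ L)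
    (hKL : K * L ≤ n) :
    K * q ^ L ≤ P {ω | L ∈ runLengths (x · ω) n} + (K * q ^ L) ^ 2 := by
  set B : ℕ → Finset ℕ := fun t => Finset.Ico (1 + t * L) (1 + t * L + L)
  have hB : ∀ s t, s ≠ t → Disjoint (B s) (B t) := by
    intro s t hst
    rcases lt_or_gt_of_ne hst with h | h <;>
    · refine Finset.disjoint_left.2 fun i hs ht => ?_
      simp only [B, Finset.mem_Ico] at hs ht
      nlinarith
  have hmain := natCast_mul_le_measure_biUnion_add_sq P (Finset.range K)
    (A := fun t => {ω | ∀ i ∈ B t, x i ω = false}) (p := q ^ L)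
    (fun t => measurableSet_setOfPred.2 (by fun_prop))
    (fun t _ => by
      rw [measure_forall_eq_false hindep hlaw, Nat.card_Ico, Nat.add_sub_cancel_left])
    (fun s _ t _ hst => by
      have hinter : {ω | ∀ i ∈ B s, x i ω = false} ∩ {ω | ∀ i ∈ B t, x i ω = false} =
          {ω | ∀ i ∈ B s ∪ B t, x i ω = false} := by
        ext; simp [or_imp, forall_and]
      rw [hinter, measure_forall_eq_false hindep hlaw, Finset.card_union_of_disjoint (hB s t hst)]
      simp [B, sq, pow_add])
  rw [Finset.card_range] at hmain
  refine hmain.trans (add_le_add_left (measure_mono ?_) _)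
  rw [setOf_mem_runLengths_eq hL]
  intro ω hω
  obtain ⟨t, ht, hω⟩ := Set.mem_iUnion₂.1 hω
  have htK := Nat.mul_le_mul_right L (Finset.mem_range.1 ht)
  exact Set.mem_iUnion₂.2 ⟨1 + t * L, Finset.mem_Icc.2 ⟨by omega, by nlinarith⟩, hω⟩

lemma quarter_le_measure_le_longestRun (hmeas : ∀ j, Measurable (x j))
    (hindep : iIndepFun x P) (hlaw : ∀ j, P {ω | x j ω = false} = 2⁻¹) {k : ℕ}
    (hkn : 2 ^ k * (k + 1) ≤ n) :
    4⁻¹ ≤ P {ω | k + 1 ≤ longestRun (x · ω) n} := by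
  have hhalf : (2 : ℝ≥0∞) ^ k * 2⁻¹ ^ (k + 1) = 2⁻¹ := by
    rw [pow_succ, ← mul_assoc, ← mul_pow, ENNReal.mul_inv_cancel two_ne_zero ENNReal.ofNat_ne_top,
      one_pow, one_mul]
  have h := natCast_mul_pow_le_measure_mem_runLengths_add_sq hmeas hindep hlaw
    (K := 2 ^ k) (L := k + 1) (by omega) hkn
  rw [Nat.cast_pow, Nat.cast_ofNat, hhalf] at h
  have hae : {ω | k + 1 ∈ runLengths (x · ω) n} ≤ᵐ[P] {ω | k + 1 ≤ longestRun (x · ω) n} :=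
    (ae_bddAbove_runLengths hindep hlaw (ENNReal.inv_lt_one.2 ENNReal.one_lt_two)).mono
      fun ω hbdd hmem => le_csSup hbdd hmem
  have hquarter : (2⁻¹ : ℝ≥0∞) ^ 2 = 4⁻¹ := by
    rw [← ENNReal.inv_pow]; norm_num
  have hsq : (2⁻¹ : ℝ≥0∞) ^ 2 + 2⁻¹ ^ 2 = 2⁻¹ := by
    rw [← two_mul, sq, ← mul_assoc, ENNReal.mul_inv_cancel two_ne_zero ENNReal.ofNat_ne_top,
      one_mul]
  rw [← hquarter]
  refine ENNReal.le_of_add_le_add_right (a := 2⁻¹ ^ 2) (by simp) ?_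
  rw [hsq]
  exact h.trans (add_le_add (measure_mono_ae hae) le_rfl)

lemma quarter_mul_two_rpow_le_lintegral (hmeas : ∀ j, Measurable (x j))
    (hindep : iIndepFun x P) (hlaw : ∀ j, P {ω | x j ω = false} = 2⁻¹) (hγ : 0 ≤ γ) {k : ℕ}
    (hkn : 2 ^ k * (k + 1) ≤ n) :
    4⁻¹ * (2 : ℝ≥0∞) ^ (γ * (k + 1)) ≤ ∫⁻ ω, 2 ^ (γ * longestRun (x · ω) n) ∂P := by
  set ε : ℝ≥0∞ := 2 ^ (γ * (k + 1))
  have hsub : {ω | k + 1 ≤ longestRun (x · ω) n} ⊆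
      {ω | ε ≤ 2 ^ (γ * longestRun (x · ω) n)} := fun ω hω =>
    ENNReal.rpow_le_rpow_of_exponent_le one_le_two
      (mul_le_mul_of_nonneg_left (by exact_mod_cast hω) hγ)
  calc 4⁻¹ * ε ≤ ε * P {ω | ε ≤ 2 ^ (γ * longestRun (x · ω) n)} := by
        rw [mul_comm]
        gcongr
        exact (quarter_le_measure_le_longestRun hmeas hindep hlaw hkn).trans (measure_mono hsub)
    _ ≤ _ := mul_meas_ge_le_lintegral₀
          ((measurable_from_top (f := fun r : ℕ => (2 : ℝ≥0∞) ^ (γ * r))).comp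
            (measurable_longestRun hmeas n)).aemeasurable ε

lemma lintegral_two_rpow_le [IsProbabilityMeasure P] (hmeas : ∀ j, Measurable (x j))
    (hindep : iIndepFun x P) (hlaw : ∀ j, P {ω | x j ω = false} = 2⁻¹) {b : ℝ} (hb0 : 0 < b)
    (hb1 : b ≤ 1) (hn : 1 ≤ n) :
    ∫⁻ ω, (2 : ℝ≥0∞) ^ (γ * longestRun (x · ω) n) ∂P ≤
      (n : ℝ≥0∞) ^ b * (1 - 2 ^ (γ - b))⁻¹ := by
  rw [← lintegral_map (f := fun r : ℕ => (2 : ℝ≥0∞) ^ (γ * r)) measurable_from_top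
    (measurable_longestRun hmeas n), lintegral_countable']
  calc ∑' r : ℕ, (2 : ℝ≥0∞) ^ (γ * r) * P.map (fun ω => longestRun (x · ω) n) {r}
      ≤ ∑' r : ℕ, (n : ℝ≥0∞) ^ b * (2 ^ (γ - b)) ^ r := ENNReal.tsum_le_tsum fun r => by
        rw [Measure.map_apply (measurable_longestRun hmeas n) (measurableSet_singleton r),
          ← ENNReal.two_rpow_mul_mul_inv_two_pow_rpow γ b hb0.le]
        gcongr
        exact (measure_longestRun_eq_le hindep hlaw hn r).trans (ENNReal.min_one_le_rpow hb0 hb1)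
    _ = (n : ℝ≥0∞) ^ b * (1 - 2 ^ (γ - b))⁻¹ := by
        rw [ENNReal.tsum_mul_left, ENNReal.tsum_geometric]

lemma integral_two_rpow_longestRun_eq (hmeas : ∀ j, Measurable (x j)) (γ : ℝ) (n : ℕ) :
    ∫ ω, (2 : ℝ) ^ (γ * longestRun (x · ω) n) ∂P =
      (∫⁻ ω, (2 : ℝ≥0∞) ^ (γ * longestRun (x · ω) n) ∂P).toReal := by
  have hm : Measurable fun ω => (2 : ℝ) ^ (γ * longestRun (x · ω) n) :=
    (measurable_from_top (f := fun r : ℕ => (2 : ℝ) ^ (γ * r))).comp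
      (measurable_longestRun hmeas n)
  rw [integral_eq_lintegral_of_nonneg_ae (ae_of_all _ fun ω => by positivity)
    hm.aestronglyMeasurable]
  congr 1
  refine lintegral_congr fun ω => ?_
  rw [← ENNReal.ofReal_rpow_of_pos two_pos, ENNReal.ofReal_ofNat]

lemma integral_two_rpow_longestRun_le [IsProbabilityMeasure P] (hmeas : ∀ j, Measurable (x j))
    (hindep : iIndepFun x P) (hlaw : ∀ j, P {ω | x j ω = false} = 2⁻¹) {b : ℝ} (hγb : γ < b)
    (hb0 : 0 < b) (hb1 : b ≤ 1) (hn : 1 ≤ n) :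
    ∫ ω, (2 : ℝ) ^ (γ * longestRun (x · ω) n) ∂P ≤
      ((1 - 2 ^ (γ - b))⁻¹ : ℝ≥0∞).toReal * n ^ b := by
  rw [integral_two_rpow_longestRun_eq hmeas, mul_comm, ← ENNReal.toReal_natCast,
    ENNReal.toReal_rpow, ← ENNReal.toReal_mul]
  exact ENNReal.toReal_mono
    (ENNReal.mul_ne_top (ENNReal.rpow_ne_top_of_nonneg hb0.le (ENNReal.natCast_ne_top n))
      (ENNReal.inv_one_sub_two_rpow_ne_top (by linarith)))
    (lintegral_two_rpow_le hmeas hindep hlaw hb0 hb1 hn)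

lemma quarter_mul_two_rpow_le_integral [IsProbabilityMeasure P] (hmeas : ∀ j, Measurable (x j))
    (hindep : iIndepFun x P) (hlaw : ∀ j, P {ω | x j ω = false} = 2⁻¹) (hγ0 : 0 ≤ γ)
    (hγ1 : γ < 1) {k : ℕ} (hkn : 2 ^ k * (k + 1) ≤ n) :
    4⁻¹ * (2 : ℝ) ^ (γ * (k + 1)) ≤ ∫ ω, (2 : ℝ) ^ (γ * longestRun (x · ω) n) ∂P := by
  have hn : 1 ≤ n := le_trans (Nat.one_le_iff_ne_zero.2 (by positivity)) hkn
  have hfin : ∫⁻ ω, (2 : ℝ≥0∞) ^ (γ * longestRun (x · ω) n) ∂P ≠ ⊤ :=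
    ne_top_of_le_ne_top (ENNReal.mul_ne_top (by simp)
      (ENNReal.inv_one_sub_two_rpow_ne_top (by linarith)))
      (lintegral_two_rpow_le hmeas hindep hlaw one_pos le_rfl hn)
  rw [integral_two_rpow_longestRun_eq hmeas]
  convert ENNReal.toReal_mono hfin (quarter_mul_two_rpow_le_lintegral hmeas hindep hlaw hγ0 hkn)
    using 1
  rw [ENNReal.toReal_mul, ← ENNReal.toReal_rpow]
  simp

end Bernoulli

/-- Let `(x_j)_{j ≥ 1}` be i.i.d. Bernoulli(1/2) digits and `R_n` the longest run of
zeroes starting in `{1, …, n}`. Then for every `0 < γ < 1`,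
`log₂ E[2^{γ R_n}] / log₂ n → γ`. -/
theorem stmt15 {Ω : Type*} [MeasurableSpace Ω] (P : Measure Ω)
    [IsProbabilityMeasure P]
    (x : ℕ → Ω → Bool)
    (hmeas : ∀ j, Measurable (x j))
    (hindep : iIndepFun x P)
    (hlaw : ∀ j, P {ω | x j ω = false} = 2⁻¹)
    (R : ℕ → Ω → ℕ)
    (hR : ∀ n ω, R n ω =
      sSup {m : ℕ | 1 ≤ m ∧ ∃ j, 1 ≤ j ∧ j ≤ n ∧ ∀ i < m, x (j + i) ω = false}) :
    ∀ γ : ℝ, 0 < γ → γ < 1 →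
      Tendsto (fun n : ℕ =>
          Real.logb 2 (∫ ω, (2 : ℝ) ^ (γ * (R n ω : ℝ)) ∂P) / Real.logb 2 n)
        atTop (nhds γ) := by
  intro γ hγ0 hγ1
  obtain rfl : R = fun n ω => longestRun (x · ω) n := funext fun n => funext (hR n)
  have hratio (y z : ℝ) : logb 2 y / logb 2 z = log y / log z :=
    div_div_div_cancel_right₀ (log_pos one_lt_two).ne' _ _
  simp only [hratio]
  refine tendsto_log_div_log_of_rpow_bounds ?_ ?_
  · filter_upwards [Ioo_mem_nhdsLT hγ0] with a ⟨ha0, haγ⟩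
    refine ⟨4⁻¹, by norm_num, ?_⟩
    filter_upwards [eventually_exists_two_pow_mul_succ_le (div_nonneg ha0.le hγ0.le)
      ((div_lt_one hγ0).2 haγ)] with n ⟨k, hkn, hnk⟩
    calc 4⁻¹ * (n : ℝ) ^ a = 4⁻¹ * ((n : ℝ) ^ (a / γ)) ^ γ := by
          rw [← rpow_mul (Nat.cast_nonneg n), div_mul_cancel₀ a hγ0.ne']
      _ ≤ 4⁻¹ * ((2 : ℝ) ^ (k + 1)) ^ γ := by gcongr
      _ = 4⁻¹ * 2 ^ (γ * (k + 1)) := by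
          rw [← rpow_natCast, ← rpow_mul zero_le_two]
          push_cast
          ring_nf
      _ ≤ _ := quarter_mul_two_rpow_le_integral hmeas hindep hlaw hγ0.le hγ1 hkn
  · filter_upwards [Ioc_mem_nhdsGT hγ1] with b ⟨hγb, hb1⟩
    exact ⟨_, (eventually_ge_atTop 1).mono fun n hn =>
      integral_two_rpow_longestRun_le hmeas hindep hlaw hγb (hγ0.trans hγb) hb1 hn⟩
end
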